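/- Any complete cap in $\mathbb{F}_{243}$ has at least 22 elements. Consequently, the subgroup of 22nd roots of unity, being a complete cap of size 22, is a complete cap of minimum size. -/

import Mathlib

/-!
Counting: a set `C` such that every point outside it is `-(x₁ + x₂)` for a pair
`{x₁, x₂} ⊆ C` covers at most `|C| + (|C| choose 2)` points, and `21 + (21 choose 2) = 231 < 243`.
The 22nd roots of unity form the subgroup of order 22 of the cyclic group `𝔽₂₄₃ˣ`,
whose order is `242 = 11 · 22`.
-/

open Finset Polynomial

theorem card_le_ncard_add_choose_two_of_forall_notMem {G : Type*} [AddCommGroup G] [Fintype G]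
    (C : Set G)
    (hC : ∀ y : G, y ∉ C →
      ∃ x₁ x₂, x₁ ∈ C ∧ x₂ ∈ C ∧ x₁ ≠ x₂ ∧ y + x₁ + x₂ = 0) :
    Fintype.card G ≤ C.ncard + C.ncard.choose 2 := by
  classical
  set s := C.toFinset
  have hcover :
      (univ : Finset G) ⊆ s ∪ (s.powersetCard 2).image (fun t => -∑ x ∈ t, x) := by
    intro y _
    by_cases hy : y ∈ C
    · exact mem_union_left _ (Set.mem_toFinset.2 hy)
    obtain ⟨x₁, x₂, h₁, h₂, hne, hsum⟩ := hC y hy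
    refine mem_union_right _ (mem_image.2 ⟨{x₁, x₂}, ?_, ?_⟩)
    · rw [mem_powersetCard, card_pair hne, insert_subset_iff, singleton_subset_iff]
      exact ⟨⟨Set.mem_toFinset.2 h₁, Set.mem_toFinset.2 h₂⟩, rfl⟩
    · rw [sum_pair hne]
      exact (eq_neg_of_add_eq_zero_left (by rwa [← add_assoc])).symm
  calc Fintype.card G = (univ : Finset G).card := card_univ.symm
    _ ≤ (s ∪ (s.powersetCard 2).image (fun t => -∑ x ∈ t, x)).card := card_le_card hcover
    _ ≤ s.card + (s.powersetCard 2).card :=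
      (card_union_le _ _).trans (by gcongr; exact card_image_le)
    _ = C.ncard + C.ncard.choose 2 := by
      rw [card_powersetCard, Set.ncard_eq_toFinset_card']

theorem FiniteField.exists_isPrimitiveRoot_of_dvd {F : Type*} [Field F] [Fintype F] {n : ℕ}
    (hn : n ∣ Fintype.card F - 1) : ∃ ζ : F, IsPrimitiveRoot ζ n := by
  obtain ⟨k, hk⟩ := hn
  obtain ⟨g, hg⟩ := IsCyclic.exists_ofOrder_eq_natCard (α := Fˣ)
  rw [Nat.card_units, Nat.card_eq_fintype_card, hk] at hg
  have hpos : 0 < n * k := hg ▸ orderOf_pos g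
  refine ⟨((g ^ k : Fˣ) : F), IsPrimitiveRoot.coe_units_iff.2 ?_⟩
  exact (hg ▸ IsPrimitiveRoot.orderOf g).pow hpos (mul_comm n k)

theorem IsPrimitiveRoot.ncard_setOf_pow_eq_one {R : Type*} [CommRing R] [IsDomain R] {ζ : R}
    {n : ℕ} (hζ : IsPrimitiveRoot ζ n) (hn : 0 < n) : {x : R | x ^ n = 1}.ncard = n := by
  have hset : {x : R | x ^ n = 1} = ↑(nthRootsFinset n (1 : R)) := by
    ext x
    simp [Polynomial.mem_nthRootsFinset hn]
  rw [hset, Set.ncard_coe_finset, hζ.card_nthRootsFinset]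

theorem stmt13 (F : Type*) [Field F] [Fintype F] (hF : Fintype.card F = 243) :
    (∀ C : Set F,
      (¬ ∃ a b c, a ∈ C ∧ b ∈ C ∧ c ∈ C ∧ a ≠ b ∧ a ≠ c ∧ b ≠ c ∧ a + b + c = 0) →
      (∀ y : F, y ∉ C → ∃ x₁ x₂, x₁ ∈ C ∧ x₂ ∈ C ∧ x₁ ≠ x₂ ∧ y + x₁ + x₂ = 0) →
      22 ≤ C.ncard) ∧
    ({x : F | x ^ 22 = 1}).ncard = 22 := by
  refine ⟨fun C _ hcomplete => ?_, ?_⟩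
  · by_contra! hsmall
    have hcover := card_le_ncard_add_choose_two_of_forall_notMem C hcomplete
    have hchoose : C.ncard.choose 2 ≤ (21 : ℕ).choose 2 := Nat.choose_mono 2 (by omega)
    have hchoose21 : (21 : ℕ).choose 2 = 210 := rfl
    omega
  · obtain ⟨ζ, hζ⟩ :=
      FiniteField.exists_isPrimitiveRoot_of_dvd (F := F) (n := 22) (by rw [hF]; norm_num)
    exact hζ.ncard_setOf_pow_eq_one (by norm_num)
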